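/- arXiv:1808.04269 — 5 statements merged into one kernel-verified Lean document; each statement's English description precedes it below -/
import Mathlib

section
/- For all integers 0 ≤ k < n, the Catalan triangle polynomial evaluated at 2 satisfies 𝔉_{n,k}(2) = binom(n+1+k, k), where 𝔉_{n,k}(x) = Σ_{s=0}^{k} C(n,s)·x^{k-s}. -/
/-- Catalan triangle number `C(n,k) = (n+k)!·(n-k+1)/(k!·(n+1)!)` for `0 ≤ k ≤ n`. -/
noncomputable def catalanTriangle (n k : ℕ) : ℚ :=
  ((n + k).factorial : ℚ) * ((n - k + 1 : ℕ) : ℚ) /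
    ((k.factorial : ℚ) * ((n + 1).factorial : ℚ))

/-- Catalan triangle polynomial `𝔉_{n,k}(x) = Σ_{s=0}^{k} C(n,s)·x^{k-s}`. -/
noncomputable def catalanTrianglePoly (n k : ℕ) (x : ℚ) : ℚ :=
  ∑ s ∈ Finset.range (k + 1), catalanTriangle n s * x ^ (k - s)

lemma key (n k : ℕ) (h : k + 1 ≤ n) :
    catalanTriangle n (k+1) =
      ((n+1+k).choose (k+1) : ℚ) - ((n+1+k).choose k : ℚ) := by
  have hA := Nat.choose_mul_factorial_mul_factorial (show k+1 ≤ n+1+k by omega)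
  have hB := Nat.choose_mul_factorial_mul_factorial (show k ≤ n+1+k by omega)
  rw [show n+1+k-(k+1) = n by omega] at hA
  rw [show n+1+k-k = n+1 by omega] at hB
  have hA' : ((n+1+k).choose (k+1) : ℚ) * (k+1).factorial * n.factorial
      = (n+1+k).factorial := by exact_mod_cast congrArg (Nat.cast : ℕ → ℚ) hA
  have hB' : ((n+1+k).choose k : ℚ) * k.factorial * (n+1).factorial
      = (n+1+k).factorial := by exact_mod_cast congrArg (Nat.cast : ℕ → ℚ) hB
  unfold catalanTriangle
  rw [show n - (k+1) + 1 = n - k by omega, show n + (k+1) = n+1+k by omega]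
  have hnk : ((n - k : ℕ) : ℚ) = (n : ℚ) - k := by
    push_cast [Nat.cast_sub (by omega : k ≤ n)]; ring
  rw [hnk]
  have h1 : ((k+1).factorial : ℚ) = ((k:ℚ)+1) * k.factorial := by
    push_cast [Nat.factorial_succ]; ring
  have h2 : ((n+1).factorial : ℚ) = ((n:ℚ)+1) * n.factorial := by
    push_cast [Nat.factorial_succ]; ring
  have hk0 : (k.factorial : ℚ) ≠ 0 := by positivity
  have hn0 : (n.factorial : ℚ) ≠ 0 := by positivity
  rw [div_eq_iff (by rw [h1, h2]; positivity)]
  rw [h1] at hA' ⊢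
  rw [h2] at hB' ⊢
  linear_combination (-(n:ℚ)-1) * hA' + ((k:ℚ)+1) * hB'

theorem catalanTrianglePoly_two (n k : ℕ) (hkn : k < n) :
    catalanTrianglePoly n k 2 = (Nat.choose (n + 1 + k) k : ℚ) := by
  induction k with
  | zero =>
    simp [catalanTrianglePoly, catalanTriangle, Nat.factorial_succ]
    field_simp
  | succ k ih =>
    have hk : k < n := by omega
    have ih' := ih hk
    unfold catalanTrianglePoly at *
    rw [Finset.sum_range_succ]
    have hsum : ∑ s ∈ Finset.range (k+1), catalanTriangle n s * 2 ^ (k+1-s)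
        = 2 * ∑ s ∈ Finset.range (k+1), catalanTriangle n s * 2 ^ (k-s) := by
      rw [Finset.mul_sum]
      refine Finset.sum_congr rfl fun s hs => ?_
      rw [Finset.mem_range] at hs
      rw [show k+1-s = (k-s)+1 by omega]
      ring
    rw [hsum, ih', key n k (by omega), Nat.sub_self, pow_zero, mul_one]
    have hP : (n+1+k+1).choose (k+1) = (n+1+k).choose k + (n+1+k).choose (k+1) :=
      Nat.choose_succ_succ (n+1+k) k
    rw [show n+1+(k+1) = n+1+k+1 by ring, hP]
    push_cast
    ring
end

section
/- For every integer n ≥ 2, binom(2n-1, n-2) + Cₙ = ((n+1)/2)·Cₙ; equivalently, 2·(binom(2n-1, n-2) + Cₙ) = (n+1)·Cₙ, where Cₙ is the n-th Catalan number. (This is the count of fully commutative elements in G(2,2,n).) -/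
theorem G22n_count (n : ℕ) (hn : 2 ≤ n) :
    2 * ((Nat.choose (2 * n - 1) (n - 2) : ℚ) + (Nat.choose (2 * n) n : ℚ) / (n + 1)) =
      ((n : ℚ) + 1) * ((Nat.choose (2 * n) n : ℚ) / (n + 1)) := by
  obtain ⟨m, rfl⟩ : ∃ m, n = m + 2 := ⟨n - 2, by omega⟩
  have e1 : 2 * (m + 2) - 1 = 2 * m + 3 := by omega
  have e2 : m + 2 - 2 = m := by omega
  have e3 : 2 * (m + 2) = 2 * m + 4 := by omega
  rw [e1, e2, e3]
  have hA : Nat.choose (2 * m + 3) (m + 1) * (m + 1)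
      = Nat.choose (2 * m + 3) m * (m + 3) := by
    have := Nat.choose_succ_right_eq (2 * m + 3) m
    simpa [show 2 * m + 3 - m = m + 3 from by omega] using this
  have hB : Nat.choose (2 * m + 4) (m + 2)
      = Nat.choose (2 * m + 3) (m + 1) + Nat.choose (2 * m + 3) (m + 2) := by
    have := Nat.choose_succ_succ (2 * m + 3) (m + 1)
    simpa [show 2 * m + 3 + 1 = 2 * m + 4 from by omega] using this
  have hC : Nat.choose (2 * m + 3) (m + 2) = Nat.choose (2 * m + 3) (m + 1) := by
    have := Nat.choose_symm (n := 2 * m + 3) (k := m + 2) (by omega)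
    simpa [show 2 * m + 3 - (m + 2) = m + 1 from by omega] using this.symm
  have hA' := congrArg (Nat.cast : ℕ → ℚ) hA
  have hB' := congrArg (Nat.cast : ℕ → ℚ) hB
  have hC' := congrArg (Nat.cast : ℕ → ℚ) hC
  push_cast at hA' hB' hC'
  have hpos : ((m : ℚ) + 2 + 1) ≠ 0 := by positivity
  field_simp
  push_cast
  linear_combination (-2) * hA' - ((m : ℚ) + 1) * hB' - ((m : ℚ) + 1) * hC'
end

section
/- Let n ≥ 2 and d ≥ 1 be integers. Then C(n,0)·(d^{n-1}-1)(d-1) + Σ_{k=1}^{n-2} C(n,k)·d^{n-k-1}(d-1) + C(n,n-1)·2(d-1) + C(n,n)·1 = d(d-1)·𝔉_{n,n-2}(d) + (2d-1)·Cₙ - (d-1), where C(n,k) are the Catalan triangle numbers, Cₙ is the n-th Catalan number, and 𝔉_{n,k}(x) = Σ_{s=0}^{k} C(n,s)x^{k-s}. -/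
lemma ct_zero (n : ℕ) : catalanTriangle n 0 = 1 := by
  have h : ((n+1).factorial : ℚ) ≠ 0 := by positivity
  simp [catalanTriangle, Nat.factorial_succ]
  field_simp

lemma ct_pred (m : ℕ) : catalanTriangle (m+1) m = catalanTriangle (m+1) (m+1) := by
  simp only [catalanTriangle]
  have e1 : m + 1 + m = 2*m + 1 := by omega
  have e2 : m + 1 + (m + 1) = (2*m+1) + 1 := by omega
  have e3 : m + 1 - m = 1 := by omega
  have e4 : m + 1 - (m + 1) = 0 := by omega
  rw [e1, e2, e3, e4, Nat.factorial_succ (2*m+1), Nat.factorial_succ m]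
  have h1 : ((2*m+1).factorial : ℚ) ≠ 0 := by positivity
  have h2 : (m.factorial : ℚ) ≠ 0 := by positivity
  have h3 : ((m+1+1).factorial : ℚ) ≠ 0 := by positivity
  field_simp
  push_cast
  ring

theorem fc_count_Gd1n (n d : ℕ) (hn : 2 ≤ n) (hd : 1 ≤ d) :
    catalanTriangle n 0 * (((d : ℚ) ^ (n - 1) - 1) * ((d : ℚ) - 1)) +
        (∑ k ∈ Finset.Icc 1 (n - 2),
          catalanTriangle n k * ((d : ℚ) ^ (n - k - 1) * ((d : ℚ) - 1))) +
        catalanTriangle n (n - 1) * (2 * ((d : ℚ) - 1)) +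
        catalanTriangle n n * 1 =
      (d : ℚ) * ((d : ℚ) - 1) * catalanTrianglePoly n (n - 2) d +
        (2 * (d : ℚ) - 1) * catalanTriangle n n - ((d : ℚ) - 1) := by
  obtain ⟨m, rfl⟩ : ∃ m, n = m + 2 := ⟨n - 2, by omega⟩
  have e2 : m + 2 - 2 = m := by omega
  have e1 : m + 2 - 1 = m + 1 := by omega
  rw [e2, e1, ct_zero, ct_pred (m+1), catalanTrianglePoly]
  have hIcc : (∑ k ∈ Finset.Icc 1 m,
      catalanTriangle (m+2) k * ((d : ℚ) ^ (m + 2 - k - 1) * ((d : ℚ) - 1))) =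
      ∑ i ∈ Finset.range m,
      catalanTriangle (m+2) (1+i) * ((d : ℚ) ^ (m + 2 - (1+i) - 1) * ((d : ℚ) - 1)) := by
    rw [← Finset.Ico_add_one_right_eq_Icc, Finset.sum_Ico_eq_sum_range, Nat.add_sub_cancel]
  rw [hIcc, Finset.sum_range_succ']
  rw [mul_add, Finset.mul_sum]
  have hterm : ∀ i ∈ Finset.range m,
      (d : ℚ) * ((d : ℚ) - 1) * (catalanTriangle (m+2) (i+1) * (d : ℚ) ^ (m - (i+1))) =
      catalanTriangle (m+2) (1+i) * ((d : ℚ) ^ (m + 2 - (1+i) - 1) * ((d : ℚ) - 1)) := by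
    intro i hi
    rw [Finset.mem_range] at hi
    have h1 : 1 + i = i + 1 := by omega
    have h2 : m + 2 - (1+i) - 1 = (m - (i+1)) + 1 := by omega
    rw [h2, h1]
    ring
  rw [Finset.sum_congr rfl hterm]
  have h3 : m - 0 = m := rfl
  rw [h3, ct_zero]
  ring
end

section
/- In the group G(d,1,n) presented by generators s₁,…,sₙ with relations sₙ^d = sᵢ² = 1 for 1 ≤ i ≤ n-1, sᵢsⱼ = sⱼsᵢ for j+1 < i ≤ n, s_{i+1}sᵢs_{i+1} = sᵢs_{i+1}sᵢ for 1 ≤ i ≤ n-2, and sₙs_{n-1}sₙs_{n-1} = s_{n-1}sₙs_{n-1}sₙ, the relation sₙ^{k₁}·s_{n-1}·sₙ^{k₂}·s_{n-1} = s_{n-1}·sₙ^{k₂}·s_{n-1}·sₙ^{k₁} holds for all k₁, k₂ ≥ 1. -/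
/-- In any group generated by elements satisfying the defining relations of `G(d,1,n)`,
the relation `sₙ^{k₁} s_{n-1} sₙ^{k₂} s_{n-1} = s_{n-1} sₙ^{k₂} s_{n-1} sₙ^{k₁}`
holds for all `k₁, k₂ ≥ 1`. -/
theorem Gd1n_long_relation (G : Type*) [Group G] (n d : ℕ) (hn : 2 ≤ n) (hd : 1 ≤ d)
    (s : ℕ → G)
    (horder : (s n) ^ d = 1)
    (hinv : ∀ i, 1 ≤ i → i ≤ n - 1 → (s i) ^ 2 = 1)
    (hcomm : ∀ i j, 1 ≤ j → j + 1 < i → i ≤ n → s i * s j = s j * s i)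
    (hbraid : ∀ i, 1 ≤ i → i ≤ n - 2 →
      s (i + 1) * s i * s (i + 1) = s i * s (i + 1) * s i)
    (hlong : s n * s (n - 1) * s n * s (n - 1) = s (n - 1) * s n * s (n - 1) * s n)
    (k₁ k₂ : ℕ) (hk₁ : 1 ≤ k₁) (hk₂ : 1 ≤ k₂) :
    (s n) ^ k₁ * s (n - 1) * (s n) ^ k₂ * s (n - 1) =
      s (n - 1) * (s n) ^ k₂ * s (n - 1) * (s n) ^ k₁ := by
  set t := s n with ht
  set u := s (n - 1) with hu
  have huu : u * u = 1 := by
    have := hinv (n - 1) (by omega) le_rfl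
    rwa [sq] at this
  -- t commutes with a := u * t * u
  have hc : Commute t (u * t * u) := by
    have : t * (u * t * u) = (u * t * u) * t := by
      calc t * (u * t * u) = t * u * t * u := by group
        _ = u * t * u * t := hlong
        _ = (u * t * u) * t := by group
    exact this
  have key : ∀ m : ℕ, u * t ^ m * u = (u * t * u) ^ m := by
    intro m
    induction m with
    | zero => simpa using huu
    | succ k ih =>
      rw [pow_succ, pow_succ, ← ih,
        show u * t ^ k * u * (u * t * u) = u * t ^ k * (u * u) * (t * u) by group, huu]
      group
  have hc2 : Commute (t ^ k₁) (u * t ^ k₂ * u) := by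
    rw [key]
    exact (hc.pow_pow k₁ k₂)
  calc t ^ k₁ * u * t ^ k₂ * u = t ^ k₁ * (u * t ^ k₂ * u) := by group
    _ = (u * t ^ k₂ * u) * t ^ k₁ := hc2
    _ = u * t ^ k₂ * u * t ^ k₁ := by group
end

section
/- In any group, if elements a and b satisfy a^d = 1, b² = 1, and abab = baba, then for all integers k ≥ 1, a b a^k b = b a^k b a. -/
theorem base_relation (G : Type*) [Group G] (a b : G) (d : ℕ)
    (ha : a ^ d = 1) (hb : b ^ 2 = 1) (h : a * b * a * b = b * a * b * a)
    (k : ℕ) (hk : 1 ≤ k) :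
    a * b * a ^ k * b = b * a ^ k * b * a := by
  have hbb : b * b = 1 := by rw [← sq]; exact hb
  induction k, hk using Nat.le_induction with
  | base => simpa [pow_one] using h
  | succ n hn ih =>
    have hab : a * b * a ^ n = b * a ^ n * b * a * b := by
      have : a * b * a ^ n * b * b = b * a ^ n * b * a * b := by rw [ih]
      calc a * b * a ^ n = a * b * a ^ n * (b * b) := by rw [hbb, mul_one]
        _ = b * a ^ n * b * a * b := by rw [← mul_assoc, this]
    calc a * b * a ^ (n + 1) * b
        = (a * b * a ^ n) * (a * b) := by rw [pow_succ]; group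
      _ = b * a ^ n * b * (a * b * a * b) := by rw [hab]; group
      _ = b * a ^ n * b * (b * a * b * a) := by rw [h]
      _ = b * a ^ n * (b * b) * a * b * a := by group
      _ = b * a ^ (n + 1) * b * a := by rw [hbb, pow_succ]; group
end
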